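/- arXiv:1804.04580 — 2 statements merged into one kernel-verified Lean document; each statement's English description precedes it below -/
import Mathlib

section
/- Given positive definite B and the affine upper bound U(Q) = log det(Γ) + Tr(Γ⁻¹ B(Q)) − n with B(Q) = A(Q) − G Q Gᵀ affine in Q, the set {Q ⪰ 0 : log det(A(Q)) − U(Q) ≥ ψ} is a convex subset of the set {Q ⪰ 0 : log det(A(Q)) − log det(B(Q)) ≥ ψ}. -/
open Matrix

/-!
The Fenchel bound `log det X ≤ log det Γ + tr (Γ⁻¹ X) - n` for positive definite `Γ` and `X` is
`log λ ≤ λ - 1` summed over the eigenvalues of `C X Cᴴ`, where `Γ⁻¹ = Cᴴ C`. It gives the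
inclusion at once. Taken at `Γ = a X + b Y` it also shows that `log det` is concave, being an
infimum of affine functions; the function defining the convexified set is therefore concave on
the PSD cone (log det of an affine map minus an affine map), and its superlevel sets are convex.
-/

theorem AffineMap.convexOn {𝕜 E β : Type*} [Ring 𝕜] [PartialOrder 𝕜] [AddCommGroup E]
    [Module 𝕜 E] [AddCommGroup β] [PartialOrder β] [Module 𝕜 β] (f : E →ᵃ[𝕜] β) {s : Set E}
    (hs : Convex 𝕜 s) : ConvexOn 𝕜 s f :=
  ⟨hs, fun _ _ _ _ _ _ _ _ hab => (Convex.combo_affine_apply hab).le⟩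

namespace Matrix

variable {ι : Type*}

theorem convex_setOf_posSemidef : Convex ℝ {X : Matrix ι ι ℝ | X.PosSemidef} :=
  fun _ hX _ hY _ _ ha hb _ => (hX.smul ha).add (hY.smul hb)

theorem convex_setOf_posDef : Convex ℝ {X : Matrix ι ι ℝ | X.PosDef} := by
  intro X hX Y hY a b ha hb hab
  rcases ha.eq_or_lt with rfl | ha
  · simpa [show b = 1 by linarith] using hY
  · exact (hX.smul ha).add_posSemidef (hY.posSemidef.smul hb)

variable [Fintype ι] [DecidableEq ι]

theorem PosDef.log_det_le_trace_sub_card {M : Matrix ι ι ℝ} (hM : M.PosDef) :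
    Real.log M.det ≤ M.trace - Fintype.card ι := by
  have hpos := hM.eigenvalues_pos
  rw [hM.isHermitian.det_eq_prod_eigenvalues, hM.isHermitian.trace_eq_sum_eigenvalues]
  simp only [RCLike.ofReal_real_eq_id, id]
  rw [Real.log_prod fun i _ => (hpos i).ne']
  calc ∑ i, Real.log (hM.1.eigenvalues i) ≤ ∑ i, (hM.1.eigenvalues i - 1) :=
        Finset.sum_le_sum fun i _ => Real.log_le_sub_one_of_pos (hpos i)
    _ = _ := by simp [Finset.sum_sub_distrib]

open scoped MatrixOrder in
theorem PosDef.log_det_le_log_det_add_trace_inv_mul {Γ X : Matrix ι ι ℝ} (hΓ : Γ.PosDef)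
    (hX : X.PosDef) : Real.log X.det ≤ Real.log Γ.det + (Γ⁻¹ * X).trace - Fintype.card ι := by
  obtain ⟨C, hΓC⟩ := CStarAlgebra.nonneg_iff_eq_star_mul_self.mp hΓ.inv.posSemidef.nonneg
  have hdetC : (star C).det * C.det = Γ.det⁻¹ := by
    rw [← det_mul, ← hΓC, det_nonsing_inv, Ring.inverse_eq_inv']
  have hC : IsUnit C := by
    rw [isUnit_iff_isUnit_det, isUnit_iff_ne_zero]
    intro h
    exact inv_ne_zero hΓ.det_pos.ne' (by rw [← hdetC, h, mul_zero])
  have hCXC : (C * X * star C).PosDef := hC.posDef_star_right_conjugate_iff.mpr hX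
  have hdet : (C * X * star C).det = Γ.det⁻¹ * X.det := by
    rw [det_mul, det_mul, ← hdetC]; ring
  have htr : (C * X * star C).trace = (Γ⁻¹ * X).trace := by
    rw [trace_mul_cycle, ← hΓC]
  have hbound := hCXC.log_det_le_trace_sub_card
  rw [hdet, htr, Real.log_mul (inv_ne_zero hΓ.det_pos.ne') hX.det_pos.ne', Real.log_inv] at hbound
  linarith

theorem concaveOn_log_det : ConcaveOn ℝ {X : Matrix ι ι ℝ | X.PosDef} fun X => Real.log X.det := by
  refine ⟨convex_setOf_posDef, fun X hX Y hY a b ha hb hab => ?_⟩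
  set Z := a • X + b • Y
  have hZ : Z.PosDef := convex_setOf_posDef hX hY ha hb hab
  have hX' := hZ.log_det_le_log_det_add_trace_inv_mul hX
  have hY' := hZ.log_det_le_log_det_add_trace_inv_mul hY
  have htr : a * (Z⁻¹ * X).trace + b * (Z⁻¹ * Y).trace = Fintype.card ι := by
    calc _ = (Z⁻¹ * Z).trace := by
          simp only [Z, Matrix.mul_add, Matrix.mul_smul, trace_add, trace_smul, smul_eq_mul]
      _ = Fintype.card ι := by rw [nonsing_inv_mul _ hZ.det_pos.ne'.isUnit, trace_one]
  calc a • Real.log X.det + b • Real.log Y.det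
      ≤ a * (Real.log Z.det + (Z⁻¹ * X).trace - Fintype.card ι) +
          b * (Real.log Z.det + (Z⁻¹ * Y).trace - Fintype.card ι) :=
        add_le_add (mul_le_mul_of_nonneg_left hX' ha) (mul_le_mul_of_nonneg_left hY' hb)
    _ = (a + b) * (Real.log Z.det - Fintype.card ι) +
          (a * (Z⁻¹ * X).trace + b * (Z⁻¹ * Y).trace) := by ring
    _ = Real.log Z.det := by rw [hab, htr]; ring

end Matrix

/-- Lemma 1: with `A(Q)` affine and `B(Q) = A(Q) − G Q Gᵀ`, both positive definite on
the PSD cone, and a fixed positive definite `Γ`, the convexified feasible set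
`S' = {Q ⪰ 0 : log det A(Q) − U(Q) ≥ ψ}` — where
`U(Q) = log det Γ + Tr(Γ⁻¹ B(Q)) − n` is the affine Fenchel upper bound — is a convex
subset of the original feasible set `S = {Q ⪰ 0 : log det A(Q) − log det B(Q) ≥ ψ}`. -/
theorem convexified_set_subset {n k : ℕ}
    (A : Matrix (Fin k) (Fin k) ℝ →ᵃ[ℝ] Matrix (Fin n) (Fin n) ℝ)
    (G : Matrix (Fin n) (Fin k) ℝ) (B : Matrix (Fin k) (Fin k) ℝ → Matrix (Fin n) (Fin n) ℝ)
    (hBdef : ∀ Q, B Q = A Q - G * Q * Gᵀ)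
    (Γ : Matrix (Fin n) (Fin n) ℝ) (hΓ : Γ.PosDef)
    (hpos : ∀ Q : Matrix (Fin k) (Fin k) ℝ, Q.PosSemidef → (A Q).PosDef ∧ (B Q).PosDef)
    (ψ : ℝ) :
    Convex ℝ {Q : Matrix (Fin k) (Fin k) ℝ | Q.PosSemidef ∧
        ψ ≤ Real.log (A Q).det - (Real.log Γ.det + (Γ⁻¹ * B Q).trace - n)} ∧
    {Q : Matrix (Fin k) (Fin k) ℝ | Q.PosSemidef ∧
        ψ ≤ Real.log (A Q).det - (Real.log Γ.det + (Γ⁻¹ * B Q).trace - n)} ⊆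
      {Q : Matrix (Fin k) (Fin k) ℝ | Q.PosSemidef ∧
        ψ ≤ Real.log (A Q).det - Real.log (B Q).det} := by
  let Bₐ : Matrix (Fin k) (Fin k) ℝ →ᵃ[ℝ] Matrix (Fin n) (Fin n) ℝ :=
    A - (mulRightLinearMap (Fin n) ℝ Gᵀ ∘ₗ mulLeftLinearMap (Fin k) ℝ G).toAffineMap
  let U : Matrix (Fin k) (Fin k) ℝ →ᵃ[ℝ] ℝ :=
    (traceLinearMap (Fin n) ℝ ℝ ∘ₗ mulLeftLinearMap (Fin n) ℝ Γ⁻¹).toAffineMap.comp Bₐ +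
      AffineMap.const ℝ _ (Real.log Γ.det - n)
  have hU : ∀ Q, U Q = Real.log Γ.det + (Γ⁻¹ * B Q).trace - n := fun Q => by
    simp only [U, Bₐ, AffineMap.coe_add, AffineMap.coe_comp, LinearMap.coe_toAffineMap,
      LinearMap.coe_comp, AffineMap.coe_sub, AffineMap.coe_const, Pi.add_apply, Pi.sub_apply,
      Function.comp_apply, Function.const_apply, mulLeftLinearMap_apply, mulRightLinearMap_apply,
      traceLinearMap_apply, hBdef, Matrix.mul_assoc]
    ring
  have hPSD := convex_setOf_posSemidef (ι := Fin k)
  have hconcave : ConcaveOn ℝ {Q | Q.PosSemidef}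
      fun Q => Real.log (A Q).det - (Real.log Γ.det + (Γ⁻¹ * B Q).trace - n) :=
    ((concaveOn_log_det.comp_affineMap A).subset (fun Q hQ => (hpos Q hQ).1) hPSD).sub
      ((U.convexOn hPSD).congr fun Q _ => hU Q)
  refine ⟨hconcave.convex_ge ψ, fun Q ⟨hQ, hψ⟩ => ⟨hQ, ?_⟩⟩
  have hfenchel := hΓ.log_det_le_log_det_add_trace_inv_mul (hpos Q hQ).2
  rw [Fintype.card_fin] at hfenchel
  linarith
end

section
/- In the successive convex approximation algorithm, if at iteration t the bound matrix is updated as Γ^(t+1) = B(Q^(t)), then the approximate rate lower bound R̃ evaluated at Q^(t) with Γ^(t+1) equals the true rate R̄(Q^(t)); consequently Q^(t) remains feasible at iteration t+1 and the sequence of optimal objective values P_Σ^(t) is non-increasing. -/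
open Matrix

/-! With `Γ = B(Qₜ)` the trace term of the surrogate is `Tr(B⁻¹ B) = n`, which cancels the `+ n`,
so the surrogate is tight at `Qₜ`. Hence a point meeting the true rate demand also meets the
convexified one, and the new optimum, an infimum of traces of positive semidefinite matrices
(bounded below by `0`), is at most `Tr Qₜ`. -/

theorem Matrix.trace_nonsing_inv_mul_self {ι R : Type*} [Fintype ι] [DecidableEq ι]
    [CommRing R] {M : Matrix ι ι R} (hM : IsUnit M.det) :
    (M⁻¹ * M).trace = Fintype.card ι := by
  rw [nonsing_inv_mul M hM, trace_one]

theorem Matrix.bddBelow_trace_image_posSemidef {ι R : Type*} [Fintype ι] [Ring R]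
    [PartialOrder R] [StarRing R] [AddLeftMono R] (p : Matrix ι ι R → Prop) :
    BddBelow (trace '' {Q : Matrix ι ι R | Q.PosSemidef ∧ p Q}) := by
  refine ⟨0, ?_⟩
  rintro _ ⟨Q, ⟨hQ, -⟩, rfl⟩
  exact hQ.trace_nonneg

/-- Successive convex approximation step: with true rate
`R̄(Q) = log det A(Q) − log det B(Q)` and concave lower bound
`R̃(Q; Γ) = log det A(Q) − log det Γ − Tr(Γ⁻¹ B(Q)) + n`, if the bound matrix is updated
as `Γ = B(Q^(t))` then the bound is tight at `Q^(t)`; consequently, if `Q^(t)` satisfied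
the rate demand `ψ`, it remains feasible at iteration `t+1`, and the new optimal
sum-power is at most the previous objective value `Tr(Q^(t))` (the objective sequence is
non-increasing). -/
theorem sca_monotone {n k : ℕ}
    (A B : Matrix (Fin k) (Fin k) ℝ → Matrix (Fin n) (Fin n) ℝ)
    (Rbar : Matrix (Fin k) (Fin k) ℝ → ℝ)
    (Rtil : Matrix (Fin k) (Fin k) ℝ → Matrix (Fin n) (Fin n) ℝ → ℝ)
    (hRbar : ∀ Q, Rbar Q = Real.log (A Q).det - Real.log (B Q).det)
    (hRtil : ∀ Q Γ, Rtil Q Γ =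
        Real.log (A Q).det - Real.log Γ.det - (Γ⁻¹ * B Q).trace + n)
    (ψ : ℝ) (Qt : Matrix (Fin k) (Fin k) ℝ) (hQt : Qt.PosSemidef)
    (hBQt : (B Qt).PosDef) :
    Rtil Qt (B Qt) = Rbar Qt ∧
    (ψ ≤ Rbar Qt → Qt ∈ {Q : Matrix (Fin k) (Fin k) ℝ | Q.PosSemidef ∧ ψ ≤ Rtil Q (B Qt)}) ∧
    (ψ ≤ Rbar Qt →
      sInf (Matrix.trace '' {Q : Matrix (Fin k) (Fin k) ℝ | Q.PosSemidef ∧ ψ ≤ Rtil Q (B Qt)})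
        ≤ Qt.trace) := by
  have htight : Rtil Qt (B Qt) = Rbar Qt := by
    rw [hRtil, hRbar, trace_nonsing_inv_mul_self hBQt.det_pos.ne'.isUnit, Fintype.card_fin,
      sub_add_cancel]
  have hfeasible (h : ψ ≤ Rbar Qt) :
      Qt ∈ {Q : Matrix (Fin k) (Fin k) ℝ | Q.PosSemidef ∧ ψ ≤ Rtil Q (B Qt)} :=
    ⟨hQt, htight ▸ h⟩
  exact ⟨htight, hfeasible, fun h =>
    csInf_le (bddBelow_trace_image_posSemidef _) (Set.mem_image_of_mem trace (hfeasible h))⟩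
end
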